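/- arXiv:0805.3853 — 2 statements merged into one kernel-verified Lean document; each statement's English description precedes it below -/
import Mathlib

section
/- Let p ≥ 1, let z_1, …, z_p be real numbers, let m_1, …, m_p be positive integers with m_1 + ⋯ + m_p = m, and let n be a natural number. Then ∑ (n!/(n_1!⋯n_p!)) · ∏_{j=1}^p (z_j)_{n_j + m_j - 1 ↑} = (∏_{j=1}^p (z_j)_{m_j - 1 ↑}) · (m + z_1 + ⋯ + z_p − p)_{n↑}, where the sum ranges over all p-tuples (n_1,…,n_p) of nonnegative integers with n_1 + ⋯ + n_p = n. -/
/-- Generalized rising factorial `(x)_{n↑h} = ∏_{i=0}^{n-1} (x + i·h)`. -/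
noncomputable def risefac (x h : ℝ) (n : ℕ) : ℝ := ∏ i ∈ Finset.range n, (x + i * h)

/-!
Writing `f_j + m_j - 1 = (m_j - 1) + f_j` splits `(z_j)_{f_j + m_j - 1↑}` as
`(z_j)_{m_j - 1↑} · (w_j)_{f_j↑}` with `w_j = z_j + m_j - 1`, and `∑ w_j = m + ∑ z_j - p`.
The theorem is then the multinomial theorem for rising factorials applied to the `w_j`.
That in turn follows by induction on the number of summands from the Chu–Vandermonde identity
`(x + y)_{n↑} = ∑ C(n, i) (x)_{i↑} (y)_{n-i↑}`, which Mathlib provides for descending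
Pochhammer symbols and which transfers through `(x)_{n↑} = (-1)ⁿ (-x)_{n↓}`.
-/

open Finset Polynomial

theorem risefac_one_length_add (x : ℝ) (a b : ℕ) :
    risefac x 1 (a + b) = risefac x 1 a * risefac (x + a) 1 b := by
  simp only [risefac, prod_range_add, Nat.cast_add, mul_one, add_assoc]

theorem risefac_one_eq_smeval_descPochhammer (x : ℝ) (n : ℕ) :
    risefac x 1 n = (-1) ^ n * (descPochhammer ℤ n).smeval (-x) := by
  rw [← aeval_eq_smeval, ← eval_map_algebraMap, descPochhammer_map,
    descPochhammer_eval_eq_prod_range, risefac, ← card_range n, ← prod_const, card_range,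
    ← prod_mul_distrib]
  exact prod_congr rfl fun i _ => by ring

theorem risefac_one_add (x y : ℝ) (n : ℕ) :
    risefac (x + y) 1 n =
      ∑ ij ∈ antidiagonal n, (n.choose ij.1 : ℝ) * (risefac x 1 ij.1 * risefac y 1 ij.2) := by
  rw [risefac_one_eq_smeval_descPochhammer, neg_add,
    Ring.descPochhammer_smeval_add _ (Commute.all _ _), mul_sum]
  refine sum_congr rfl fun ij hij => ?_
  rw [risefac_one_eq_smeval_descPochhammer, risefac_one_eq_smeval_descPochhammer,
    ← mem_antidiagonal.1 hij, pow_add]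
  ring

theorem Nat.cast_multinomial {α K : Type*} [Semifield K] [CharZero K] (s : Finset α)
    (f : α → ℕ) :
    (Nat.multinomial s f : K) = (∑ i ∈ s, f i).factorial / ∏ i ∈ s, ((f i).factorial : K) := by
  rw [Nat.multinomial, Nat.cast_div (Nat.prod_factorial_dvd_factorial_sum s f)
    (Nat.cast_ne_zero.2 (Nat.prod_factorial_pos s f).ne'), Nat.cast_prod]

theorem risefac_one_sum_eq_sum_piAntidiag {α : Type*} [DecidableEq α] (s : Finset α) (x : α → ℝ)
    (n : ℕ) :
    risefac (∑ i ∈ s, x i) 1 n =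
      ∑ k ∈ s.piAntidiag n, (Nat.multinomial s k : ℝ) * ∏ i ∈ s, risefac (x i) 1 (k i) := by
  induction s using Finset.cons_induction generalizing n with
  | empty => cases n <;> simp [risefac, prod_range_succ']
  | cons a s has ih =>
    rw [sum_cons, risefac_one_add, piAntidiag_cons, sum_disjiUnion]
    refine sum_congr rfl fun ij hij => ?_
    rw [sum_map, ih, mul_sum, mul_sum]
    refine sum_congr rfl fun k hk => ?_
    obtain ⟨hks, hsupp⟩ := mem_piAntidiag.1 hk
    have hka : k a = 0 := not_imp_comm.1 (hsupp a) has
    have hk_on_s : ∀ i ∈ s, (k + fun t => if t = a then ij.1 else 0) i = k i := fun i hi => by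
      simp [ne_of_mem_of_not_mem hi has]
    simp only [addRightEmbedding_apply]
    rw [Nat.multinomial_cons, prod_cons, Nat.multinomial_congr hk_on_s,
      prod_congr rfl fun i hi => congrArg (risefac (x i) 1) (hk_on_s i hi),
      sum_congr rfl hk_on_s, hks, Pi.add_apply, hka, zero_add, if_pos rfl, mem_antidiagonal.1 hij]
    push_cast
    ring

theorem risefac_multinomial_shifted_general (p : ℕ) (z : Fin p → ℝ)
    (mvec : Fin p → ℕ) (hm : ∀ j, 0 < mvec j) (m : ℕ) (hmsum : ∑ j, mvec j = m) (n : ℕ) :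
    ∑ f ∈ Finset.Nat.antidiagonalTuple p n,
        ((n.factorial : ℝ) / ∏ j, ((f j).factorial : ℝ)) *
          ∏ j, risefac (z j) 1 (f j + mvec j - 1)
      = (∏ j, risefac (z j) 1 (mvec j - 1)) * risefac ((m : ℝ) + (∑ j, z j) - p) 1 n := by
  set w : Fin p → ℝ := fun j => z j + (mvec j - 1 : ℕ)
  have hw : ∑ j, w j = (m : ℝ) + ∑ j, z j - p := by
    simp [w, sum_add_distrib, Nat.cast_sub (hm _), ← hmsum]
    ring
  have hsplit (f : Fin p → ℕ) (j : Fin p) :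
      risefac (z j) 1 (f j + mvec j - 1) =
        risefac (z j) 1 (mvec j - 1) * risefac (w j) 1 (f j) := by
    rw [add_comm, Nat.sub_add_comm (hm j), risefac_one_length_add]
  rw [← hw, risefac_one_sum_eq_sum_piAntidiag, piAntidiag_univ_fin_eq_antidiagonalTuple, mul_sum]
  refine sum_congr rfl fun f hf => ?_
  simp only [hsplit, prod_mul_distrib, Nat.cast_multinomial, Nat.mem_antidiagonalTuple.1 hf]
  ring

/-- For positive integers `m_1,…,m_p` with sum `m`:
`∑ (n!/(n_1!⋯n_p!)) ∏_j (z_j)_{n_j+m_j-1↑} = (∏_j (z_j)_{m_j-1↑}) · (m + z_1+⋯+z_p − p)_{n↑}`,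
the sum over nonnegative tuples with `n_1 + ⋯ + n_p = n`. -/
theorem risefac_multinomial_shifted (p : ℕ) (hp : 1 ≤ p) (z : Fin p → ℝ)
    (mvec : Fin p → ℕ) (hm : ∀ j, 0 < mvec j) (m : ℕ) (hmsum : ∑ j, mvec j = m) (n : ℕ) :
    ∑ f ∈ Finset.Nat.antidiagonalTuple p n,
        ((n.factorial : ℝ) / ∏ j, ((f j).factorial : ℝ)) *
          ∏ j, risefac (z j) 1 (f j + mvec j - 1)
      = (∏ j, risefac (z j) 1 (mvec j - 1)) * risefac ((m : ℝ) + (∑ j, z j) - p) 1 n :=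
  risefac_multinomial_shifted_general p z mvec hm m hmsum n
end

section
/- For every real α < 1, every natural number n, and every real number x: (x)_{n↑} = ∑_{k=0}^{n} S_{n,k}^{-1,-α} · (x)_{k↑α}, i.e. the explicitly defined composition sums S_{n,k}^{-1,-α} are the connection coefficients between the rising factorials with increment 1 and increment α. -/
/-- Generalized Stirling number `S_{n,k}^{-1,-α} = (n!/k!) ∑ ∏_j (1-α)_{n_j-1↑}/n_j!`,
the sum over positive tuples `(n_1,…,n_k)` with sum `n`. -/
noncomputable def genStirling (α : ℝ) (n k : ℕ) : ℝ :=
  ((n.factorial : ℝ) / k.factorial) *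
    ∑ f ∈ (Finset.Nat.antidiagonalTuple k n).filter (fun f => ∀ i, 0 < f i),
      ∏ j, risefac (1 - α) 1 (f j - 1) / (f j).factorial

open PowerSeries Finset

theorem PowerSeries.coeff_pow_eq_sum_antidiagonalTuple {R : Type*} [CommSemiring R]
    (φ : R⟦X⟧) (k n : ℕ) :
    coeff n (φ ^ k) = ∑ f ∈ Nat.antidiagonalTuple k n, ∏ j, coeff (f j) φ := by
  classical
  rw [← Fin.prod_const, coeff_prod]
  refine sum_nbij' (⇑) Finsupp.equivFunOnFinite.symm ?_ ?_ ?_ ?_ ?_ <;>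
    simp [Nat.mem_antidiagonalTuple]

theorem PowerSeries.coeff_one_sub_X_mul_derivative {R : Type*} [CommRing R] (f : R⟦X⟧) (n : ℕ) :
    coeff n ((1 - X) * d⁄dX R f) = (n + 1) * coeff (n + 1) f - n * coeff n f := by
  rw [sub_mul, one_mul, map_sub, coeff_derivative, mul_comm]
  rcases n with _ | n
  · simp
  · rw [coeff_succ_X_mul, coeff_derivative]
    push_cast
    ring

theorem risefac_succ (x h : ℝ) (n : ℕ) : risefac x h (n + 1) = risefac x h n * (x + n * h) :=
  prod_range_succ _ _

noncomputable def genStirlingCoeff (α : ℝ) : ℕ → ℝ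
  | 0 => 0
  | m + 1 => risefac (1 - α) 1 m / (m + 1).factorial

theorem genStirlingCoeff_succ_mul (α : ℝ) (m : ℕ) :
    (m + 1) * genStirlingCoeff α (m + 1) =
      (m - α) * genStirlingCoeff α m + if m = 0 then 1 else 0 := by
  rcases m with _ | m
  · simp [genStirlingCoeff, risefac]
  · simp only [genStirlingCoeff, risefac_succ, Nat.factorial_succ (m + 1), Nat.cast_mul]
    push_cast
    field_simp
    ring

noncomputable def genStirlingSeries (α : ℝ) : ℝ⟦X⟧ := mk (genStirlingCoeff α)

theorem one_sub_X_mul_derivative_genStirlingSeries (α : ℝ) :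
    (1 - X) * d⁄dX ℝ (genStirlingSeries α) = 1 - C α * genStirlingSeries α := by
  ext n
  rw [coeff_one_sub_X_mul_derivative, genStirlingSeries, coeff_mk, coeff_mk,
    genStirlingCoeff_succ_mul, map_sub, coeff_C_mul, coeff_mk, coeff_one]
  ring

theorem one_sub_X_mul_derivative_genStirlingSeries_pow (α : ℝ) (k : ℕ) :
    (1 - X) * d⁄dX ℝ (genStirlingSeries α ^ (k + 1)) =
      C (k + 1 : ℝ) * genStirlingSeries α ^ k -
        C ((k + 1) * α) * genStirlingSeries α ^ (k + 1) := by
  rw [derivative_pow, Nat.add_sub_cancel, mul_left_comm, mul_assoc,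
    one_sub_X_mul_derivative_genStirlingSeries]
  simp only [map_mul, map_add, map_natCast, map_one, Nat.cast_add, Nat.cast_one]
  ring

theorem succ_mul_coeff_genStirlingSeries_pow_succ (α : ℝ) (n k : ℕ) :
    (n + 1) * coeff (n + 1) (genStirlingSeries α ^ (k + 1)) =
      (n - (k + 1) * α) * coeff n (genStirlingSeries α ^ (k + 1)) +
        (k + 1) * coeff n (genStirlingSeries α ^ k) := by
  have h := congrArg (coeff n) (one_sub_X_mul_derivative_genStirlingSeries_pow α k)
  rw [coeff_one_sub_X_mul_derivative, map_sub, coeff_C_mul, coeff_C_mul] at h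
  linear_combination h

theorem X_pow_dvd_genStirlingSeries_pow (α : ℝ) (k : ℕ) : X ^ k ∣ genStirlingSeries α ^ k :=
  pow_dvd_pow_of_dvd (X_dvd_iff.mpr (by simp [genStirlingSeries, genStirlingCoeff])) k

theorem genStirling_eq_coeff (α : ℝ) (n k : ℕ) :
    genStirling α n k = (n.factorial / k.factorial : ℝ) * coeff n (genStirlingSeries α ^ k) := by
  rw [genStirling, coeff_pow_eq_sum_antidiagonalTuple]
  congr 1
  have hpos : ∀ f ∈ Nat.antidiagonalTuple k n,
      ∏ j, coeff (f j) (genStirlingSeries α) ≠ 0 → ∀ i, 0 < f i :=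
    fun f _ hf i => Nat.pos_of_ne_zero fun hi =>
      hf (prod_eq_zero (mem_univ i) (by simp [hi, genStirlingSeries, genStirlingCoeff]))
  rw [← sum_filter_of_ne hpos]
  refine sum_congr rfl fun f hf => prod_congr rfl fun j _ => ?_
  obtain ⟨m, hm⟩ := Nat.exists_eq_add_of_lt ((mem_filter.mp hf).2 j)
  simp [hm, genStirlingSeries, genStirlingCoeff]

theorem genStirling_zero_right (α : ℝ) (n : ℕ) : genStirling α n 0 = if n = 0 then 1 else 0 := by
  rw [genStirling_eq_coeff, pow_zero, coeff_one]
  split_ifs with hn <;> simp [hn]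

theorem genStirling_of_lt (α : ℝ) {n k : ℕ} (h : n < k) : genStirling α n k = 0 := by
  obtain ⟨q, hq⟩ := X_pow_dvd_genStirlingSeries_pow α k
  rw [genStirling_eq_coeff, hq, coeff_X_pow_mul', if_neg h.not_ge, mul_zero]

theorem genStirling_succ_succ (α : ℝ) (n k : ℕ) :
    genStirling α (n + 1) (k + 1) =
      genStirling α n k + (n - (k + 1) * α) * genStirling α n (k + 1) := by
  simp only [genStirling_eq_coeff]
  calc
    _ = (n.factorial / (k + 1).factorial : ℝ) *
          ((n + 1) * coeff (n + 1) (genStirlingSeries α ^ (k + 1))) := by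
      push_cast [Nat.factorial_succ]
      field_simp
    _ = _ := by
      rw [succ_mul_coeff_genStirlingSeries_pow_succ]
      push_cast [Nat.factorial_succ]
      field_simp
      ring

theorem sum_genStirling_mul_risefac_succ (α x : ℝ) (n : ℕ) :
    ∑ k ∈ range (n + 2), genStirling α (n + 1) k * risefac x α k =
      (∑ k ∈ range (n + 1), genStirling α n k * risefac x α k) * (x + n) := by
  set F : ℕ → ℝ := fun k => (n - k * α) * genStirling α n k * risefac x α k
  have hshift : ∑ k ∈ range (n + 1), F (k + 1) = ∑ k ∈ range (n + 1), F k := by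
    have hF₀ : F 0 = 0 := by rcases n with _ | n <;> simp [F, genStirling_zero_right]
    have hF₁ : F (n + 1) = 0 := by simp [F, genStirling_of_lt α n.lt_succ_self]
    have hsum := sum_range_succ' F (n + 1)
    rw [sum_range_succ, hF₀, hF₁, add_zero, add_zero] at hsum
    exact hsum.symm
  have hsplit (k : ℕ) : genStirling α n k * risefac x α k * (x + n) =
      genStirling α n k * risefac x α (k + 1) + F k := by
    rw [risefac_succ]
    ring
  rw [sum_range_succ', genStirling_zero_right, if_neg n.succ_ne_zero, zero_mul, add_zero,
    sum_mul]
  simp only [genStirling_succ_succ, hsplit, add_mul, sum_add_distrib, ← hshift, F,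
    Nat.cast_succ]

theorem risefac_eq_sum_genStirling_general (α : ℝ) (n : ℕ) (x : ℝ) :
    risefac x 1 n = ∑ k ∈ Finset.range (n + 1), genStirling α n k * risefac x α k := by
  induction n with
  | zero => simp [risefac, genStirling_zero_right]
  | succ n ih => rw [sum_genStirling_mul_risefac_succ, ← ih, risefac_succ, mul_one]

/-- `(x)_{n↑} = ∑_{k=0}^n S_{n,k}^{-1,-α} (x)_{k↑α}`: the generalized Stirling numbers
are the connection coefficients between rising factorials with increments 1 and α. -/
theorem risefac_eq_sum_genStirling (α : ℝ) (hα : α < 1) (n : ℕ) (x : ℝ) :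
    risefac x 1 n = ∑ k ∈ Finset.range (n + 1), genStirling α n k * risefac x α k :=
  risefac_eq_sum_genStirling_general α n x
end
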